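/- arXiv:2411.02535 — 2 statements merged into one kernel-verified Lean document; each statement's English description precedes it below -/
import Mathlib

section
/- For a finite set M of Hermitian Pauli operators generating a group ⟨M⟩ in which every element squares to ±I and which contains no element equal to -I times another of its elements up to phase issues (i.e., viewing the phaseless group), the composition of projection channels satisfies ∘_{P ∈ M} Π_P (ρ) = (1/|⟨M⟩|) Σ_{Q ∈ ⟨M⟩} Q ρ Q†, where ⟨M⟩ is the group generated by M modulo phases. -/
/-!
`Π_P` averages `ρ ↦ P^a ρ (P^a)ᴴ` over `a ∈ ℤ/2`, so the composite channel averages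
`ρ ↦ φ v ρ (φ v)ᴴ` over `v ∈ (ℤ/2)^k`, where `φ v = ∏ i, s i ^ v i`. Since the `s i` are commuting
involutions, `φ` is a monoid homomorphism whose image is `⟨M⟩`. All fibres of a homomorphism
out of a finite group have the size of its kernel, so averaging over `(ℤ/2)^k` is the same as
averaging over the image `⟨M⟩`.
-/

open Matrix Finset

/-- The Pauli projection channel `Π_P(ρ) = (1/2)ρ + (1/2) P ρ P†`. -/
noncomputable def pauliProj {m : Type*} [Fintype m] [DecidableEq m]
    (P ρ : Matrix m m ℂ) : Matrix m m ℂ :=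
  (1/2 : ℂ) • ρ + (1/2 : ℂ) • (P * ρ * Pᴴ)

namespace MonoidHom

variable {M : Type*} [Monoid M]

def ofInvolution (x : M) (hx : x * x = 1) : Multiplicative (ZMod 2) →* M where
  toFun a := x ^ a.toAdd.val
  map_one' := by simp
  map_mul' a b := by
    rw [toAdd_mul, ZMod.val_add, ← pow_add, ← pow_eq_pow_mod _ (by rwa [sq])]

lemma ofInvolution_apply (x : M) (hx : x * x = 1) (a : Multiplicative (ZMod 2)) :
    ofInvolution x hx a = x ^ a.toAdd.val := rfl

@[simp]
lemma ofInvolution_ofAdd_one (x : M) (hx : x * x = 1) :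
    ofInvolution x hx (.ofAdd 1) = x := by
  simp [ofInvolution_apply, ZMod.val_one]

lemma commute_ofInvolution_apply {x y : M} {hx : x * x = 1} {hy : y * y = 1} (h : Commute x y)
    (a b : Multiplicative (ZMod 2)) : Commute (ofInvolution x hx a) (ofInvolution y hy b) :=
  h.pow_pow _ _

lemma noncommPiCoprod_apply_eq_prod_ofFn {k : ℕ} {N : Fin k → Type*} [∀ i, Monoid (N i)]
    (ϕ : ∀ i, N i →* M) (hcomm : Pairwise fun i j => ∀ x y, Commute (ϕ i x) (ϕ j y))
    (v : ∀ i, N i) :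
    noncommPiCoprod ϕ hcomm v = (List.ofFn fun i => ϕ i (v i)).prod := by
  simp only [noncommPiCoprod_apply, Finset.noncommProd, Fin.univ_val_map, Multiset.noncommProd_coe]

lemma inv_card_smul_sum_comp_eq_inv_card_image_smul_sum {G K β : Type*} [Group G] [Fintype G]
    [DecidableEq M] [Field K] [CharZero K] [AddCommGroup β] [Module K β]
    (f : G →* M) (F : M → β) :
    (Fintype.card G : K)⁻¹ • ∑ g, F (f g)
      = (#(univ.image f) : K)⁻¹ • ∑ x ∈ univ.image f, F x := by
  set c := #{g | f g = 1} with hc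
  have hfiber : ∀ x ∈ univ.image f, #{g | f g = x} = c := fun x hx =>
    card_fiber_eq_of_mem_range f (by simpa using hx) ⟨1, map_one f⟩
  have hsum : ∑ g, F (f g) = c • ∑ x ∈ univ.image f, F x := by
    rw [sum_comp, smul_sum]
    exact sum_congr rfl fun x hx => by rw [hfiber x hx]
  have hcard : Fintype.card G = #(univ.image f) * c := by
    rw [← card_univ, card_eq_sum_card_image f, sum_congr rfl hfiber, sum_const, smul_eq_mul]
  have hc0 : (c : K) ≠ 0 := by
    rw [Nat.cast_ne_zero, hc, ← Nat.pos_iff_ne_zero, card_pos]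
    exact ⟨1, by simp⟩
  rw [hsum, hcard, ← Nat.cast_smul_eq_nsmul K, smul_smul, Nat.cast_mul, mul_inv,
    inv_mul_cancel_right₀ hc0]

section CommutingInvolutions

variable {ι : Type*} [Fintype ι] [DecidableEq ι]

def ofCommutingInvolutions (s : ι → M) (hsq : ∀ i, s i * s i = 1)
    (hcomm : ∀ i j, Commute (s i) (s j)) : (ι → Multiplicative (ZMod 2)) →* M :=
  noncommPiCoprod (fun i => ofInvolution (s i) (hsq i)) fun i j _ =>
    commute_ofInvolution_apply (hcomm i j)

variable (s : ι → M) (hsq : ∀ i, s i * s i = 1) (hcomm : ∀ i j, Commute (s i) (s j))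

lemma ofCommutingInvolutions_mulSingle (i : ι) (a : Multiplicative (ZMod 2)) :
    ofCommutingInvolutions s hsq hcomm (Pi.mulSingle i a) = ofInvolution (s i) (hsq i) a :=
  noncommPiCoprod_mulSingle _ _ _

lemma ofCommutingInvolutions_indicator (S : Finset ι) :
    ofCommutingInvolutions s hsq hcomm
        (fun i => if i ∈ S then Multiplicative.ofAdd (1 : ZMod 2) else 1)
      = S.noncommProd s (fun a _ b _ _ => hcomm a b) := by
  induction S using Finset.induction with
  | empty => exact map_one _
  | @insert a S ha ih =>
    have hsplit : (fun i => if i ∈ insert a S then Multiplicative.ofAdd (1 : ZMod 2) else 1)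
        = Pi.mulSingle a (.ofAdd 1)
          * fun i => if i ∈ S then Multiplicative.ofAdd (1 : ZMod 2) else 1 := by
      ext i
      by_cases h : i = a
      · subst h; simp [ha]
      · simp [h]
    rw [noncommProd_insert_of_notMem _ _ _ (fun a _ b _ _ => hcomm a b) ha, hsplit, map_mul, ih,
      ofCommutingInvolutions_mulSingle, ofInvolution_ofAdd_one]

lemma image_ofCommutingInvolutions [DecidableEq M] :
    univ.image (ofCommutingInvolutions s hsq hcomm)
      = univ.image fun S : Finset ι => S.noncommProd s (fun a _ b _ _ => hcomm a b) := by
  ext x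
  simp only [mem_image, mem_univ, true_and, ← ofCommutingInvolutions_indicator s hsq hcomm]
  refine ⟨fun ⟨v, hv⟩ => ⟨({i | v i = .ofAdd 1} : Finset ι), ?_⟩, fun ⟨S, hS⟩ => ⟨_, hS⟩⟩
  convert hv using 2
  funext i
  simp only [mem_filter, mem_univ, true_and]
  split_ifs with h
  · exact h.symm
  · revert h; generalize v i = a; revert a; decide

end CommutingInvolutions

lemma ofCommutingInvolutions_apply_eq_prod_ofFn {k : ℕ} (s : Fin k → M)
    (hsq : ∀ i, s i * s i = 1) (hcomm : ∀ i j, Commute (s i) (s j))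
    (v : Fin k → Multiplicative (ZMod 2)) :
    ofCommutingInvolutions s hsq hcomm v
      = (List.ofFn fun i => ofInvolution (s i) (hsq i) (v i)).prod :=
  noncommPiCoprod_apply_eq_prod_ofFn _ _ v

end MonoidHom

open MonoidHom

variable {m : Type*} [Fintype m] [DecidableEq m]

lemma pauliProj_eq_sum (P : Matrix m m ℂ) (hP : P * P = 1) (ρ : Matrix m m ℂ) :
    pauliProj P ρ = (2 : ℂ)⁻¹ • ∑ a, ofInvolution P hP a * ρ * (ofInvolution P hP a)ᴴ := by
  rw [show (univ : Finset (Multiplicative (ZMod 2))) = {1, .ofAdd 1} by decide,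
    sum_pair (by decide)]
  simp [ofInvolution_apply, pauliProj, ZMod.val_one]

lemma foldr_pauliProj_eq_sum {k : ℕ} (s : Fin k → Matrix m m ℂ) (hsq : ∀ i, s i * s i = 1)
    (ρ : Matrix m m ℂ) :
    (List.ofFn s).foldr (fun P σ => pauliProj P σ) ρ
      = ((2 : ℂ) ^ k)⁻¹ • ∑ v : Fin k → Multiplicative (ZMod 2),
          (List.ofFn fun i => ofInvolution (s i) (hsq i) (v i)).prod * ρ
            * (List.ofFn fun i => ofInvolution (s i) (hsq i) (v i)).prodᴴ := by
  induction k with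
  | zero => simp
  | succ k ih =>
    rw [List.ofFn_succ, List.foldr_cons, ih _ fun i => hsq i.succ, pauliProj_eq_sum _ (hsq 0),
      ← (Fin.consEquiv fun _ => Multiplicative (ZMod 2)).sum_comp, Fintype.sum_prod_type]
    simp only [Fin.consEquiv_apply, List.ofFn_succ, Fin.cons_zero, Fin.cons_succ, List.prod_cons,
      Matrix.mul_smul, Matrix.smul_mul, Finset.mul_sum, Finset.sum_mul, smul_sum,
      conjTranspose_mul, Matrix.mul_assoc, smul_smul, pow_succ, mul_inv, mul_comm]

theorem stmt3_general (n k : ℕ) (s : Fin k → Matrix (Fin (2^n)) (Fin (2^n)) ℂ)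
    (hsq : ∀ i, s i * s i = 1)
    (hcomm : ∀ i j, Commute (s i) (s j))
    (G : Finset (Matrix (Fin (2^n)) (Fin (2^n)) ℂ))
    (hG : G = Finset.image (fun S : Finset (Fin k) => S.noncommProd s (fun a _ b _ _ => hcomm a b)) Finset.univ) :
    ∀ ρ : Matrix (Fin (2^n)) (Fin (2^n)) ℂ,
      (List.ofFn s).foldr (fun P σ => pauliProj P σ) ρ
        = (G.card : ℂ)⁻¹ • ∑ Q ∈ G, Q * ρ * Qᴴ := by
  intro ρ
  have hcard : (Fintype.card (Fin k → Multiplicative (ZMod 2)) : ℂ) = 2 ^ k := by simp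
  rw [foldr_pauliProj_eq_sum s hsq, hG, ← image_ofCommutingInvolutions s hsq hcomm, ← hcard]
  simp_rw [← ofCommutingInvolutions_apply_eq_prod_ofFn s hsq hcomm]
  exact inv_card_smul_sum_comp_eq_inv_card_image_smul_sum _ fun Q => Q * ρ * Qᴴ

/-- Composition of the projection channels `Π_{P}` over a finite family `P = s 0, …, s (k-1)`
of commuting Hermitian involutions (phaseless Pauli generators) equals averaging
`ρ ↦ (1/|⟨M⟩|) Σ_{Q ∈ ⟨M⟩} Q ρ Q†` over the generated (elementary abelian) group `⟨M⟩`,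
realized as the set of all subset-products of the generators. -/
theorem stmt3 (n k : ℕ) (s : Fin k → Matrix (Fin (2^n)) (Fin (2^n)) ℂ)
    (hherm : ∀ i, (s i)ᴴ = s i)
    (hsq : ∀ i, s i * s i = 1)
    (hcomm : ∀ i j, Commute (s i) (s j))
    (G : Finset (Matrix (Fin (2^n)) (Fin (2^n)) ℂ))
    (hG : G = Finset.image (fun S : Finset (Fin k) => S.noncommProd s (fun a _ b _ _ => hcomm a b)) Finset.univ) :
    ∀ ρ : Matrix (Fin (2^n)) (Fin (2^n)) ℂ,
      (List.ofFn s).foldr (fun P σ => pauliProj P σ) ρ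
        = (G.card : ℂ)⁻¹ • ∑ Q ∈ G, Q * ρ * Qᴴ :=
  stmt3_general n k s hsq hcomm G hG
end

section
/- In any graph G with n vertices and maximum degree Δ, the number of connected induced subgraphs with exactly k vertices is at most n·2^{Δk}. -/
set_option linter.unusedSectionVars false

namespace Stmt16Aux

open SimpleGraph Finset

variable {V : Type*} [Fintype V] [DecidableEq V] [LinearOrder V]
variable (G : SimpleGraph V) [DecidableRel G.Adj]

/-- Candidate frontier vertices: in `S`, not yet explored, adjacent to an explored vertex. -/
def cand (S E : Finset V) : Finset V :=
  S.filter fun w => w ∉ E ∧ ∃ v ∈ E, G.Adj v w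

lemma cand_subset (S E : Finset V) : cand G S E ⊆ S := Finset.filter_subset _ _

lemma mem_cand {S E : Finset V} {w : V} :
    w ∈ cand G S E ↔ w ∈ S ∧ w ∉ E ∧ ∃ v ∈ E, G.Adj v w := Finset.mem_filter

/-- Greedy BFS-style exploration of `S`. -/
def explore (S : Finset V) : ℕ → Finset V
  | 0 => if h : S.Nonempty then {S.min' h} else ∅
  | (i+1) => if h : (cand G S (explore S i)).Nonempty
      then insert ((cand G S (explore S i)).min' h) (explore S i)
      else explore S i

variable [Nonempty V]

/-- The vertex discovered at step `i`. -/
noncomputable def vtx (S : Finset V) : ℕ → V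
  | 0 => if h : S.Nonempty then S.min' h else Classical.arbitrary V
  | (i+1) => if h : (cand G S (explore G S i)).Nonempty
      then (cand G S (explore G S i)).min' h else Classical.arbitrary V

lemma explore_subset (S : Finset V) : ∀ i, explore G S i ⊆ S
  | 0 => by
    rw [explore]
    split
    · next h => intro w hw; rw [Finset.mem_singleton.1 hw]; exact S.min'_mem h
    · exact Finset.empty_subset _
  | (i+1) => by
    rw [explore]
    split
    · next h =>
      exact Finset.insert_subset (cand_subset G S _ (Finset.min'_mem _ h)) (explore_subset S i)
    · exact explore_subset S i

lemma explore_nonempty {S : Finset V} (hS : S.Nonempty) : ∀ i, (explore G S i).Nonempty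
  | 0 => by rw [explore, dif_pos hS]; exact Finset.singleton_nonempty _
  | (i+1) => by
    rw [explore]
    split
    · exact Finset.insert_nonempty _ _
    · exact explore_nonempty hS i

lemma mem_explore_vtx {S : Finset V} : ∀ i, ∀ w ∈ explore G S i, ∃ j ≤ i, vtx G S j = w
  | 0, w, hw => by
    rw [explore] at hw
    split at hw
    · next h =>
      exact ⟨0, le_refl 0, by rw [vtx, dif_pos h, Finset.mem_singleton.1 hw]⟩
    · exact absurd hw (Finset.notMem_empty w)
  | (i+1), w, hw => by
    rw [explore] at hw
    split at hw
    · next h =>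
      rcases Finset.mem_insert.1 hw with h1 | h2
      · exact ⟨i+1, le_refl _, by rw [vtx, dif_pos h, h1]⟩
      · obtain ⟨j, hj, hv⟩ := mem_explore_vtx i w h2
        exact ⟨j, hj.trans (Nat.le_succ i), hv⟩
    · obtain ⟨j, hj, hv⟩ := mem_explore_vtx i w hw
      exact ⟨j, hj.trans (Nat.le_succ i), hv⟩

lemma crossing {S E : Finset V} :
    ∀ {u w : (↑S : Set V)} (_ : (G.induce (↑S : Set V)).Walk u w),
      ↑u ∈ E → ↑w ∉ E → (cand G S E).Nonempty := by
  intro u w p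
  induction p with
  | nil => intro hu hw; exact absurd hu hw
  | @cons a b c h p ih =>
    intro hu hw
    by_cases hb : ↑b ∈ E
    · exact ih hb hw
    · exact ⟨↑b, (mem_cand G).2 ⟨Finset.mem_coe.1 b.2, hb, ↑a, hu, h⟩⟩

lemma cand_nonempty_of_ne {S E : Finset V} (hconn : (G.induce (↑S : Set V)).Connected)
    (hE : E.Nonempty) (hES : E ⊆ S) (hne : E ≠ S) : (cand G S E).Nonempty := by
  obtain ⟨x, hx⟩ := hE
  obtain ⟨y, hyS, hyE⟩ := Finset.exists_of_ssubset (hES.ssubset_of_ne hne)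
  obtain ⟨p⟩ := hconn.preconnected ⟨x, Finset.mem_coe.2 (hES hx)⟩ ⟨y, Finset.mem_coe.2 hyS⟩
  exact crossing G p hx hyE

lemma explore_card {S : Finset V} (hconn : (G.induce (↑S : Set V)).Connected)
    (hS : S.Nonempty) : ∀ i, explore G S i = S ∨ (explore G S i).card = i + 1
  | 0 => Or.inr (by rw [explore, dif_pos hS, Finset.card_singleton])
  | (i+1) => by
    by_cases heq : explore G S i = S
    · left
      rw [explore]
      have : cand G S (explore G S i) = ∅ := by
        rw [heq]
        ext w
        simp [mem_cand, and_comm]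
        tauto
      rw [this]
      simp [heq]
    · rcases explore_card hconn hS i with h | h
      · exact absurd h heq
      · right
        have hc : (cand G S (explore G S i)).Nonempty :=
          cand_nonempty_of_ne G hconn (explore_nonempty G hS i) (explore_subset G S i) heq
        rw [explore, dif_pos hc, Finset.card_insert_of_notMem, h]
        exact ((mem_cand G).1 (Finset.min'_mem _ hc)).2.1

lemma explore_eq_self {S : Finset V} (hconn : (G.induce (↑S : Set V)).Connected)
    (hS : S.Nonempty) : explore G S (S.card - 1) = S := by
  rcases explore_card G hconn hS (S.card - 1) with h | h
  · exact h
  · refine Finset.eq_of_subset_of_card_le (explore_subset G S _) ?_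
    rw [h, Nat.sub_add_cancel (Finset.card_pos.2 hS)]

/-- Index of `w` in the sorted list of neighbours of `v`. -/
def emb (v w : V) : ℕ := List.idxOf w ((G.neighborFinset v).sort (· ≤ ·))

lemma emb_lt {Δ : ℕ} (hdeg : ∀ v, G.degree v ≤ Δ) {v w : V} (hw : w ∈ G.neighborFinset v) :
    emb G v w < Δ := by
  have : emb G v w < ((G.neighborFinset v).sort (· ≤ ·)).length :=
    List.idxOf_lt_length_iff.2 ((Finset.mem_sort _).2 hw)
  rw [Finset.length_sort, SimpleGraph.card_neighborFinset_eq_degree] at this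
  exact this.trans_le (hdeg v)


lemma emb_inj {v w₁ w₂ : V} (h1 : w₁ ∈ G.neighborFinset v) (h2 : w₂ ∈ G.neighborFinset v)
    (h : emb G v w₁ = emb G v w₂) : w₁ = w₂ :=
  (List.idxOf_inj ((Finset.mem_sort _).2 h1)).1 h

/-- The code recording, for the `i`-th discovered vertex, which of its neighbours are in `S`. -/
noncomputable def code (S : Finset V) (Δ : ℕ) (i : ℕ) : Finset (Fin Δ) :=
  Finset.univ.filter fun j =>
    ∃ w ∈ S ∩ G.neighborFinset (vtx G S i), emb G (vtx G S i) w = (j : ℕ)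


lemma inter_nbhd_subset {Δ : ℕ} (hdeg : ∀ v, G.degree v ≤ Δ) {S T : Finset V} {j : ℕ} {v : V}
    (hc : code G S Δ j = code G T Δ j) (hvS : vtx G S j = v) (hvT : vtx G T j = v) :
    S ∩ G.neighborFinset v ⊆ T ∩ G.neighborFinset v := by
  intro w hw
  have hwN : w ∈ G.neighborFinset v := (Finset.mem_inter.1 hw).2
  have hj : emb G v w < Δ := emb_lt G hdeg hwN
  have hmem : (⟨emb G v w, hj⟩ : Fin Δ) ∈ code G S Δ j := by
    rw [code, Finset.mem_filter, hvS]
    exact ⟨Finset.mem_univ _, w, hw, rfl⟩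
  rw [hc, code, Finset.mem_filter, hvT] at hmem
  obtain ⟨-, w', hw', he⟩ := hmem
  have : w' = w := emb_inj G (Finset.mem_inter.1 hw').2 hwN he
  rwa [this] at hw'

lemma explore_vtx_eq {S T : Finset V} {Δ k : ℕ} (hdeg : ∀ v, G.degree v ≤ Δ)
    (hS : S.Nonempty) (hT : T.Nonempty)
    (hroot : vtx G S 0 = vtx G T 0)
    (hcode : ∀ j < k, code G S Δ j = code G T Δ j) :
    ∀ i < k, explore G S i = explore G T i ∧ vtx G S i = vtx G T i := by
  intro i
  induction i using Nat.strong_induction_on with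
  | _ i ih =>
    match i with
    | 0 =>
      intro _
      refine ⟨?_, hroot⟩
      rw [explore, explore, dif_pos hS, dif_pos hT]
      rw [vtx, vtx, dif_pos hS, dif_pos hT] at hroot
      rw [hroot]
    | (i+1) =>
      intro hik
      have hE : explore G S i = explore G T i :=
        (ih i (Nat.lt_succ_self i) ((Nat.lt_succ_self i).trans hik)).1
      have hcand : cand G S (explore G S i) = cand G T (explore G T i) := by
        rw [← hE]
        ext w
        rw [mem_cand, mem_cand]
        constructor
        · rintro ⟨hwS, hwE, v, hvE, hadj⟩
          obtain ⟨j, hj, hvtx⟩ := mem_explore_vtx G i v hvE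
          have hjk : j < k := (hj.trans_lt (Nat.lt_succ_self i)).trans hik
          have hvT' : vtx G T j = v :=
            ((ih j (Nat.lt_succ_of_le hj) hjk).2).symm.trans hvtx
          have hsub := inter_nbhd_subset G hdeg (hcode j hjk) hvtx hvT'
          have : w ∈ T ∩ G.neighborFinset v :=
            hsub (Finset.mem_inter.2 ⟨hwS, (SimpleGraph.mem_neighborFinset _ _ _).2 hadj⟩)
          exact ⟨(Finset.mem_inter.1 this).1, hwE, v, hvE,
            (SimpleGraph.mem_neighborFinset _ _ _).1 (Finset.mem_inter.1 this).2⟩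
        · rintro ⟨hwT, hwE, v, hvE, hadj⟩
          obtain ⟨j, hj, hvtx⟩ := mem_explore_vtx G i v hvE
          have hjk : j < k := (hj.trans_lt (Nat.lt_succ_self i)).trans hik
          have hvT' : vtx G T j = v :=
            ((ih j (Nat.lt_succ_of_le hj) hjk).2).symm.trans hvtx
          have hsub := inter_nbhd_subset G hdeg (hcode j hjk).symm hvT' hvtx
          have : w ∈ S ∩ G.neighborFinset v :=
            hsub (Finset.mem_inter.2 ⟨hwT, (SimpleGraph.mem_neighborFinset _ _ _).2 hadj⟩)
          exact ⟨(Finset.mem_inter.1 this).1, hwE, v, hvE,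
            (SimpleGraph.mem_neighborFinset _ _ _).1 (Finset.mem_inter.1 this).2⟩
      constructor
      · rw [explore, explore, ← hcand, ← hE]
      · rw [vtx, vtx, ← hcand]

lemma finset_eq {S T : Finset V} {Δ k : ℕ} (hdeg : ∀ v, G.degree v ≤ Δ) (hk : 0 < k)
    (hScard : S.card = k) (hTcard : T.card = k)
    (hSconn : (G.induce (↑S : Set V)).Connected) (hTconn : (G.induce (↑T : Set V)).Connected)
    (hroot : vtx G S 0 = vtx G T 0)
    (hcode : ∀ j < k, code G S Δ j = code G T Δ j) : S = T := by
  have hS : S.Nonempty := Finset.card_pos.1 (hScard ▸ hk)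
  have hT : T.Nonempty := Finset.card_pos.1 (hTcard ▸ hk)
  have hkey := (explore_vtx_eq G hdeg hS hT hroot hcode (k-1) (Nat.sub_lt hk one_pos)).1
  have h1 := explore_eq_self G hSconn hS
  have h2 := explore_eq_self G hTconn hT
  rw [hScard] at h1
  rw [hTcard] at h2
  rw [← h1, ← h2, hkey]

end Stmt16Aux


/-- In any graph on `n` vertices of maximum degree at most `Δ`, the number of connected
induced subgraphs with exactly `k` vertices is at most `n · 2^{Δk}`. -/
theorem stmt16 {V : Type*} [Fintype V] [DecidableEq V] (G : SimpleGraph V)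
    [DecidableRel G.Adj] (n Δ k : ℕ) (hn : Fintype.card V = n)
    (hdeg : ∀ v : V, G.degree v ≤ Δ) :
    {s : Finset V | s.card = k ∧ (G.induce (s : Set V)).Connected}.ncard
      ≤ n * 2 ^ (Δ * k) := by
  classical
  rcases eq_or_ne k 0 with rfl | hk0
  · have hempty : {s : Finset V | s.card = 0 ∧ (G.induce (s : Set V)).Connected} = ∅ := by
      ext s
      simp only [Set.mem_setOf_eq, Set.mem_empty_iff_false, iff_false, not_and]
      intro hc hconn
      rw [Finset.card_eq_zero] at hc
      subst hc
      obtain ⟨x⟩ := hconn.nonempty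
      simpa using x.2
    rw [hempty]
    simp
  · have hk : 0 < k := Nat.pos_of_ne_zero hk0
    set A := {s : Finset V | s.card = k ∧ (G.induce (s : Set V)).Connected} with hA_def
    rcases A.eq_empty_or_nonempty with hA | hA
    · rw [hA]; simp
    · obtain ⟨s0, hs0⟩ := hA
      have hs0ne : s0.Nonempty := Finset.card_pos.1 (hs0.1 ▸ hk)
      haveI : Nonempty V := ⟨hs0ne.choose⟩
      letI : LinearOrder V := LinearOrder.lift' (Fintype.equivFin V) (Fintype.equivFin V).injective
      set F : Finset V → V × (Fin k → Finset (Fin Δ)) :=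
        fun s => (Stmt16Aux.vtx G s 0, fun j => Stmt16Aux.code G s Δ (j : ℕ)) with hF_def
      have hinj : Set.InjOn F A := by
        rintro S ⟨hScard, hSconn⟩ T ⟨hTcard, hTconn⟩ hFeq
        have h1 : Stmt16Aux.vtx G S 0 = Stmt16Aux.vtx G T 0 := congrArg Prod.fst hFeq
        have h2 : ∀ j < k, Stmt16Aux.code G S Δ j = Stmt16Aux.code G T Δ j := by
          intro j hj
          exact congrFun (congrArg Prod.snd hFeq) ⟨j, hj⟩
        exact Stmt16Aux.finset_eq G hdeg hk hScard hTcard hSconn hTconn h1 h2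
      calc A.ncard = (F '' A).ncard := (Set.ncard_image_of_injOn hinj).symm
        _ ≤ (Set.univ : Set (V × (Fin k → Finset (Fin Δ)))).ncard :=
            Set.ncard_le_ncard (Set.subset_univ _) Set.finite_univ
        _ = Fintype.card V * (2 ^ Δ) ^ k := by
            rw [Set.ncard_univ, Nat.card_eq_fintype_card, Fintype.card_prod,
              Fintype.card_fun, Fintype.card_finset, Fintype.card_fin, Fintype.card_fin]
        _ = n * 2 ^ (Δ * k) := by rw [hn, ← pow_mul]
end
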